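/- arXiv:2407.10337 — 7 statements merged into one kernel-verified Lean document; each statement's English description precedes it below -/
import Mathlib

section
/- Let n ≥ 1 and let γ : [0, T] → ℝⁿ be a continuously differentiable curve with last coordinate γₙ(t) > 0 for all t ∈ [0, T]. Then ∫₀ᵀ coth(γₙ(t)) ‖γ'(t)‖ dt ≥ | ln(sinh(γₙ(T))) − ln(sinh(γₙ(0))) |, where ‖·‖ is the Euclidean norm. -/
lemma abs_coord_le_norm {n : ℕ} (x : EuclideanSpace ℝ (Fin n)) (i : Fin n) :
    |x i| ≤ ‖x‖ := by
  rw [EuclideanSpace.norm_eq]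
  have h1 : |x i| = Real.sqrt (‖x i‖ ^ 2) := by
    rw [Real.sqrt_sq_eq_abs]; simp [abs_abs]
  rw [h1]
  apply Real.sqrt_le_sqrt
  exact Finset.single_le_sum (f := fun j => ‖x j‖ ^ 2)
    (fun j _ => sq_nonneg _) (Finset.mem_univ i)

/-- Length estimate of Example 3 (EX4): for a `C¹` curve `γ : [0,T] → ℝⁿ` whose last
coordinate is positive, `∫₀ᵀ coth(γₙ(t)) ‖γ'(t)‖ dt ≥ |ln sinh(γₙ(T)) − ln sinh(γₙ(0))|`. -/
theorem coth_length_estimate (n : ℕ) (hn : 1 ≤ n) (T : ℝ) (hT : 0 ≤ T)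
    (γ γ' : ℝ → EuclideanSpace ℝ (Fin n))
    (hderiv : ∀ t ∈ Set.Icc (0 : ℝ) T, HasDerivAt γ (γ' t) t)
    (hcont : ContinuousOn γ' (Set.Icc (0 : ℝ) T))
    (hpos : ∀ t ∈ Set.Icc (0 : ℝ) T, 0 < γ t ⟨n - 1, by omega⟩) :
    |Real.log (Real.sinh (γ T ⟨n - 1, by omega⟩))
      - Real.log (Real.sinh (γ 0 ⟨n - 1, by omega⟩))|
    ≤ ∫ t in (0 : ℝ)..T,
        (Real.cosh (γ t ⟨n - 1, by omega⟩) / Real.sinh (γ t ⟨n - 1, by omega⟩)) * ‖γ' t‖ := by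
  set i : Fin n := ⟨n - 1, by omega⟩ with hi
  have hγc : ContinuousOn γ (Set.Icc 0 T) :=
    fun t ht => ((hderiv t ht).continuousAt).continuousWithinAt
  have hsinh_pos : ∀ t ∈ Set.Icc (0:ℝ) T, 0 < Real.sinh (γ t i) :=
    fun t ht => Real.sinh_pos_iff.2 (hpos t ht)
  -- derivative of log ∘ sinh ∘ coordinate
  have hF : ∀ t ∈ Set.Icc (0:ℝ) T,
      HasDerivAt (fun s => Real.log (Real.sinh (γ s i)))
        (Real.cosh (γ t i) / Real.sinh (γ t i) * γ' t i) t := by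
    intro t ht
    have h1 : HasDerivAt (fun s => γ s i) (γ' t i) t := by
      have := (EuclideanSpace.proj (𝕜 := ℝ) i).hasFDerivAt.comp_hasDerivAt t (hderiv t ht)
      exact this
    have h2 : HasDerivAt (fun s => Real.sinh (γ s i)) (Real.cosh (γ t i) * γ' t i) t :=
      (Real.hasDerivAt_sinh _).comp t h1
    have hs : Real.sinh (γ t i) ≠ 0 := ne_of_gt (hsinh_pos t ht)
    have := h2.log hs
    convert this using 1
    ring
  -- continuity of the derivative integrand
  have hcoord : ContinuousOn (fun t => γ t i) (Set.Icc (0:ℝ) T) :=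
    (EuclideanSpace.proj (𝕜 := ℝ) i).continuous.comp_continuousOn hγc
  have hcoord' : ContinuousOn (fun t => γ' t i) (Set.Icc (0:ℝ) T) :=
    (EuclideanSpace.proj (𝕜 := ℝ) i).continuous.comp_continuousOn hcont
  have hFc : ContinuousOn
      (fun t => Real.cosh (γ t i) / Real.sinh (γ t i) * γ' t i) (Set.Icc (0:ℝ) T) := by
    apply ContinuousOn.mul _ hcoord'
    apply ContinuousOn.div
    · exact Real.continuous_cosh.comp_continuousOn hcoord
    · exact Real.continuous_sinh.comp_continuousOn hcoord
    · exact fun t ht => ne_of_gt (hsinh_pos t ht)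
  have hGc : ContinuousOn
      (fun t => Real.cosh (γ t i) / Real.sinh (γ t i) * ‖γ' t‖) (Set.Icc (0:ℝ) T) := by
    apply ContinuousOn.mul
    · apply ContinuousOn.div
      · exact Real.continuous_cosh.comp_continuousOn hcoord
      · exact Real.continuous_sinh.comp_continuousOn hcoord
      · exact fun t ht => ne_of_gt (hsinh_pos t ht)
    · exact hcont.norm
  have hFint : IntervalIntegrable
      (fun t => Real.cosh (γ t i) / Real.sinh (γ t i) * γ' t i) MeasureTheory.volume 0 T := by
    apply ContinuousOn.intervalIntegrable
    rwa [Set.uIcc_of_le hT]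
  have hGint : IntervalIntegrable
      (fun t => Real.cosh (γ t i) / Real.sinh (γ t i) * ‖γ' t‖) MeasureTheory.volume 0 T := by
    apply ContinuousOn.intervalIntegrable
    rwa [Set.uIcc_of_le hT]
  have heq : ∫ t in (0:ℝ)..T, Real.cosh (γ t i) / Real.sinh (γ t i) * γ' t i
      = Real.log (Real.sinh (γ T i)) - Real.log (Real.sinh (γ 0 i)) := by
    apply intervalIntegral.integral_eq_sub_of_hasDerivAt
    · intro t ht
      exact hF t (by rwa [Set.uIcc_of_le hT] at ht)
    · exact hFint
  rw [← heq]
  calc |∫ t in (0:ℝ)..T, Real.cosh (γ t i) / Real.sinh (γ t i) * γ' t i|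
      ≤ ∫ t in (0:ℝ)..T, |Real.cosh (γ t i) / Real.sinh (γ t i) * γ' t i| :=
        intervalIntegral.abs_integral_le_integral_abs hT
    _ ≤ ∫ t in (0:ℝ)..T, Real.cosh (γ t i) / Real.sinh (γ t i) * ‖γ' t‖ := by
        apply intervalIntegral.integral_mono_on hT (hFint.abs) hGint
        intro t ht
        have hc : 0 < Real.cosh (γ t i) / Real.sinh (γ t i) :=
          div_pos (Real.cosh_pos _) (hsinh_pos t ht)
        rw [abs_mul, abs_of_pos hc]
        exact mul_le_mul_of_nonneg_left (abs_coord_le_norm (γ' t) i) hc.le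
end

section
/- Let f(t) = cosh t and h(t,s) = ln 2 + ln(cosh t) + ln(cosh s) as functions on ℝ². Then for all (t, s) ∈ ℝ²: (i) −f''(t)/f(t) + ∂²h/∂t² + (∂h/∂t)² = R/2 + 1; (ii) ∂²h/∂t∂s − (f'(t)/f(t))·∂h/∂s + (∂h/∂t)(∂h/∂s) = 0; (iii) −f(t)f''(t) + ∂²h/∂s² + f(t)f'(t)·∂h/∂t + (∂h/∂s)² = (R/2 + 1)·f(t)², where R := −2f''(t)/f(t) (so R = −2 and R/2 + 1 = 0). -/
open Real

private lemma hasDerivAt_logcosh (t : ℝ) :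
    HasDerivAt (fun x : ℝ => Real.log (Real.cosh x)) (Real.tanh t) t := by
  have h1 : HasDerivAt Real.cosh (Real.sinh t) t := Real.hasDerivAt_cosh t
  have h2 := (Real.hasDerivAt_log (ne_of_gt (Real.cosh_pos (x := t)))).comp t h1
  simpa [Function.comp_def, Real.tanh_eq_sinh_div_cosh, div_eq_mul_inv, mul_comm] using h2

private lemma deriv_logcosh :
    deriv (fun x : ℝ => Real.log (Real.cosh x)) = Real.tanh :=
  funext fun t => (hasDerivAt_logcosh t).deriv

private lemma hasDerivAt_tanh (t : ℝ) :
    HasDerivAt Real.tanh (1 / (Real.cosh t) ^ 2) t := by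
  have h1 : HasDerivAt Real.sinh (Real.cosh t) t := Real.hasDerivAt_sinh t
  have h2 : HasDerivAt Real.cosh (Real.sinh t) t := Real.hasDerivAt_cosh t
  have hc : Real.cosh t ≠ 0 := ne_of_gt (Real.cosh_pos t)
  have := h1.div h2 hc
  have key : (Real.cosh t * Real.cosh t - Real.sinh t * Real.sinh t) / Real.cosh t ^ 2
      = 1 / Real.cosh t ^ 2 := by
    rw [← sq, ← sq, Real.cosh_sq_sub_sinh_sq]
  have heq : Real.tanh = fun x => Real.sinh x / Real.cosh x := by
    funext x; exact Real.tanh_eq_sinh_div_cosh x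
  rw [heq, ← key]
  exact this

/-- The warped product `ℝ ×_{cosh t} ℝ` with `h(t,s) = ln 2 + ln cosh t + ln cosh s` is a
gradient Einstein-type manifold satisfying `Ric + ∇²h + dh⊗dh = (R_g/2 + 1) g`, expressed
componentwise via the warped-product formulas for `Ric` and `∇²h`. -/
theorem cosh_warped_einstein_type
    (f : ℝ → ℝ) (hf : ∀ t, f t = Real.cosh t)
    (h : ℝ → ℝ → ℝ)
    (hh : ∀ t s, h t s = Real.log 2 + Real.log (Real.cosh t) + Real.log (Real.cosh s))
    (R : ℝ → ℝ) (hR : ∀ t, R t = -2 * deriv (deriv f) t / f t) :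
    ∀ t s : ℝ,
      (-(deriv (deriv f) t) / f t
          + deriv (deriv (fun a => h a s)) t
          + (deriv (fun a => h a s) t) ^ 2 = R t / 2 + 1) ∧
      (deriv (fun b => deriv (fun a => h a b) t) s
          - (deriv f t / f t) * deriv (fun b => h t b) s
          + (deriv (fun a => h a s) t) * (deriv (fun b => h t b) s) = 0) ∧
      (-(f t * deriv (deriv f) t)
          + deriv (deriv (fun b => h t b)) s
          + f t * deriv f t * deriv (fun a => h a s) t
          + (deriv (fun b => h t b) s) ^ 2 = (R t / 2 + 1) * (f t) ^ 2) := by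
  have hf' : f = Real.cosh := funext hf
  have hh' : h = fun t s => Real.log 2 + Real.log (Real.cosh t) + Real.log (Real.cosh s) :=
    funext fun t => funext fun s => hh t s
  subst hf' hh'
  intro t s
  -- derivatives of f
  have df : deriv Real.cosh = Real.sinh := Real.deriv_cosh
  have ddf : deriv (deriv Real.cosh) t = Real.cosh t := by
    rw [df, Real.deriv_sinh]
  -- partial derivative in t
  have dht : ∀ s t : ℝ,
      deriv (fun a => Real.log 2 + Real.log (Real.cosh a) + Real.log (Real.cosh s)) t
        = Real.tanh t := by
    intro s t
    have : HasDerivAt (fun a => Real.log 2 + Real.log (Real.cosh a) + Real.log (Real.cosh s))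
        (Real.tanh t) t := ((hasDerivAt_logcosh t).const_add _).add_const _
    exact this.deriv
  have dht_fun : ∀ s : ℝ,
      deriv (fun a => Real.log 2 + Real.log (Real.cosh a) + Real.log (Real.cosh s))
        = Real.tanh := fun s => funext (dht s)
  -- partial derivative in s
  have dhs : ∀ t s : ℝ,
      deriv (fun b => Real.log 2 + Real.log (Real.cosh t) + Real.log (Real.cosh b)) s
        = Real.tanh s := by
    intro t s
    have : HasDerivAt (fun b => Real.log 2 + Real.log (Real.cosh t) + Real.log (Real.cosh b))
        (Real.tanh s) s := HasDerivAt.const_add _ (hasDerivAt_logcosh s)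
    exact this.deriv
  have dhs_fun : ∀ t : ℝ,
      deriv (fun b => Real.log 2 + Real.log (Real.cosh t) + Real.log (Real.cosh b))
        = Real.tanh := fun t => funext (dhs t)
  have dtanh : ∀ x : ℝ, deriv Real.tanh x = 1 / Real.cosh x ^ 2 :=
    fun x => (hasDerivAt_tanh x).deriv
  have mixed : deriv (fun b : ℝ =>
      deriv (fun a => Real.log 2 + Real.log (Real.cosh a) + Real.log (Real.cosh b)) t) s = 0 := by
    have : (fun b : ℝ =>
        deriv (fun a => Real.log 2 + Real.log (Real.cosh a) + Real.log (Real.cosh b)) t)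
        = fun _ => Real.tanh t := by
      funext b; exact dht b t
    rw [this, deriv_const]
  have hc : Real.cosh t ≠ 0 := ne_of_gt (Real.cosh_pos t)
  have hcs : Real.cosh s ≠ 0 := ne_of_gt (Real.cosh_pos s)
  have pyth_t : Real.cosh t ^ 2 - Real.sinh t ^ 2 = 1 := Real.cosh_sq_sub_sinh_sq t
  have pyth_s : Real.cosh s ^ 2 - Real.sinh s ^ 2 = 1 := Real.cosh_sq_sub_sinh_sq s
  refine ⟨?_, ?_, ?_⟩
  · simp only [dht_fun, dtanh, hR, ddf, Real.tanh_eq_sinh_div_cosh]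
    field_simp
    linear_combination (-1 : ℝ) * pyth_t
  · simp only [mixed, df, dhs, dht, deriv_const, Real.tanh_eq_sinh_div_cosh]
    field_simp
    ring
  · simp only [dhs_fun, dtanh, dht, df, ddf, hR, Real.tanh_eq_sinh_div_cosh]
    field_simp
    linear_combination (-Real.cosh s ^ 2) * pyth_t + (-1 : ℝ) * pyth_s
end

section
/- Fix an integer n ≥ 2, an integer m ≥ 1, and real numbers α ≠ 0 and ρ. With parameters β = 1, μ = 1, a = 1, θ = 0, the functions Ψ(x) = x, f(x) = 1/x, h(x) = ln(x+1) − ln(x) and λ(x) = 1 − α(n+m−1) − x/(x+1) + ρ(n+m)(n+m−1) satisfy the three equations (E1), (E2), (E3) for every x > 0. -/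
/-- The expression `S` of the paper's Proposition 2 (the scalar curvature term):
`S = (n−1)(2ΨΨ″ − n(Ψ′)²) − 2mΨ²(f″/f − (n−2)(Ψ′/Ψ)(f′/f)) − m(m−1)Ψ²(f′/f)²`. -/
noncomputable def Sexpr (n m : ℕ) (Ψ f : ℝ → ℝ) (x : ℝ) : ℝ :=
  ((n : ℝ) - 1) * (2 * Ψ x * deriv (deriv Ψ) x - (n : ℝ) * (deriv Ψ x) ^ 2)
    - 2 * (m : ℝ) * (Ψ x) ^ 2 *
        (deriv (deriv f) x / f x - ((n : ℝ) - 2) * (deriv Ψ x / Ψ x) * (deriv f x / f x))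
    - (m : ℝ) * ((m : ℝ) - 1) * (Ψ x) ^ 2 * (deriv f x / f x) ^ 2

/-- Equation (E1) of the paper's Proposition 2:
`α(n−2)Ψ″/Ψ − αm f″/f − 2αm(f′/f)(Ψ′/Ψ) + βh″ + 2β(Ψ′/Ψ)h′ + μ(h′)² = 0`. -/
def E1 (n m : ℕ) (α β μ : ℝ) (Ψ f h : ℝ → ℝ) (x : ℝ) : Prop :=
  α * ((n : ℝ) - 2) * (deriv (deriv Ψ) x / Ψ x)
    - α * (m : ℝ) * (deriv (deriv f) x / f x)
    - 2 * α * (m : ℝ) * (deriv f x / f x) * (deriv Ψ x / Ψ x)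
    + β * deriv (deriv h) x
    + 2 * β * (deriv Ψ x / Ψ x) * deriv h x
    + μ * (deriv h x) ^ 2 = 0

/-- Equation (E2) of the paper's Proposition 2:
`αΨΨ″ − α(n−1)(Ψ′)² + αmΨΨ′(f′/f) − βΨΨ′h′ = ρS + λ/a`. -/
def E2 (n m : ℕ) (α β ρ a : ℝ) (Ψ f h lam : ℝ → ℝ) (x : ℝ) : Prop :=
  α * Ψ x * deriv (deriv Ψ) x - α * ((n : ℝ) - 1) * (deriv Ψ x) ^ 2
    + α * (m : ℝ) * Ψ x * deriv Ψ x * (deriv f x / f x)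
    - β * Ψ x * deriv Ψ x * deriv h x
  = ρ * Sexpr n m Ψ f x + lam x / a

/-- Equation (E3) of the paper's Proposition 2:
`αθ/(a f²) + Ψ²(−α(f″/f − (n−2)(Ψ′/Ψ)(f′/f)) − α(m−1)(f′/f)² + βh′(f′/f)) = ρS + λ/a`. -/
def E3 (n m : ℕ) (α β ρ a θ : ℝ) (Ψ f h lam : ℝ → ℝ) (x : ℝ) : Prop :=
  α * θ / (a * (f x) ^ 2)
    + (Ψ x) ^ 2 *
        (-α * (deriv (deriv f) x / f x
              - ((n : ℝ) - 2) * (deriv Ψ x / Ψ x) * (deriv f x / f x))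
          - α * ((m : ℝ) - 1) * (deriv f x / f x) ^ 2
          + β * deriv h x * (deriv f x / f x))
  = ρ * Sexpr n m Ψ f x + lam x / a

/-- Example 2 (EX2): with `β = 1`, `μ = 1`, `a = 1`, `θ = 0` and any `α ≠ 0`, `ρ`, the
functions `Ψ = x`, `f = 1/x`, `h = ln(x+1) − ln x`,
`λ = 1 − α(n+m−1) − x/(x+1) + ρ(n+m)(n+m−1)` satisfy (E1), (E2), (E3) for `x > 0`. -/
theorem example_EX2 (n m : ℕ) (hn : 2 ≤ n) (hm : 1 ≤ m)
    (α β μ ρ a θ : ℝ)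
    (hα : α ≠ 0) (hβ : β = 1) (hμ : μ = 1) (ha : a = 1) (hθ : θ = 0)
    (Ψ f h lam : ℝ → ℝ)
    (hΨ : ∀ x : ℝ, Ψ x = x)
    (hf : ∀ x : ℝ, f x = 1 / x)
    (hh : ∀ x : ℝ, h x = Real.log (x + 1) - Real.log x)
    (hlam : ∀ x : ℝ, lam x = 1 - α * ((n : ℝ) + m - 1) - x / (x + 1)
      + ρ * ((n : ℝ) + m) * ((n : ℝ) + m - 1)) :
    ∀ x : ℝ, 0 < x → E1 n m α β μ Ψ f h x ∧ E2 n m α β ρ a Ψ f h lam x ∧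
      E3 n m α β ρ a θ Ψ f h lam x := by
  have hΨe : Ψ = fun x : ℝ => x := funext hΨ
  have hfe : f = fun x : ℝ => x⁻¹ := by funext y; rw [hf, one_div]
  have hhe : h = fun x : ℝ => Real.log (x + 1) - Real.log x := funext hh
  subst hΨe hfe hhe hβ hμ ha hθ
  intro x hx
  have hx0 : x ≠ 0 := ne_of_gt hx
  have hx1 : x + 1 ≠ 0 := by positivity
  have dΨf : deriv (fun x : ℝ => x) = fun _ : ℝ => (1:ℝ) := by funext y; simp
  have ddΨ : deriv (deriv (fun x : ℝ => x)) x = 0 := by rw [dΨf]; simp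
  have dΨx : deriv (fun x : ℝ => x) x = 1 := by simp
  have dff : deriv (fun x : ℝ => x⁻¹) = fun x : ℝ => -(x ^ 2)⁻¹ := by
    funext y; simp [deriv_inv]
  have dfx : deriv (fun x : ℝ => x⁻¹) x = -(x ^ 2)⁻¹ := by rw [dff]
  have ddf : deriv (deriv (fun x : ℝ => x⁻¹)) x = 2 / x ^ 3 := by
    rw [dff]
    have h1 : HasDerivAt (fun y : ℝ => -(y ^ 2)⁻¹) (2 / x ^ 3) x := by
      have : HasDerivAt (fun y : ℝ => -(y ^ 2)⁻¹) _ x := ((hasDerivAt_pow 2 x).inv (pow_ne_zero 2 hx0)).neg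
      convert this using 1
      field_simp
      ring
    exact h1.deriv
  have dh : ∀ y : ℝ, 0 < y →
      deriv (fun x : ℝ => Real.log (x + 1) - Real.log x) y = (y + 1)⁻¹ - y⁻¹ := by
    intro y hy
    have hy0 : y ≠ 0 := ne_of_gt hy
    have hy1 : y + 1 ≠ 0 := by positivity
    have h1 : HasDerivAt (fun x : ℝ => Real.log (x + 1)) (y + 1)⁻¹ y := by
      have := (Real.hasDerivAt_log hy1).comp y ((hasDerivAt_id y).add_const 1)
      simp at this
      exact this
    exact (h1.sub (Real.hasDerivAt_log hy0)).deriv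
  have dhx : deriv (fun x : ℝ => Real.log (x + 1) - Real.log x) x = (x + 1)⁻¹ - x⁻¹ := dh x hx
  have ddh : deriv (deriv (fun x : ℝ => Real.log (x + 1) - Real.log x)) x
      = -((x + 1) ^ 2)⁻¹ + (x ^ 2)⁻¹ := by
    have hev : deriv (fun x : ℝ => Real.log (x + 1) - Real.log x)
        =ᶠ[nhds x] fun y => (y + 1)⁻¹ - y⁻¹ := by
      filter_upwards [Ioi_mem_nhds hx] with y hy using dh y hy
    rw [hev.deriv_eq]
    have hA : HasDerivAt (fun y : ℝ => (y + 1)⁻¹) (-1 / (x + 1) ^ 2) x := by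
      have := ((hasDerivAt_id x).add_const 1).inv hx1
      simp at this
      exact this
    have hB : HasDerivAt (fun y : ℝ => y⁻¹) (-1 / x ^ 2) x := by
      have := (hasDerivAt_id x).inv hx0
      simp at this
      exact this
    have h1 := hA.sub hB
    have : (-1 / (x + 1) ^ 2 - -1 / x ^ 2) = -((x + 1) ^ 2)⁻¹ + (x ^ 2)⁻¹ := by
      field_simp
      ring
    rw [this] at h1
    exact h1.deriv
  refine ⟨?_, ?_, ?_⟩
  · unfold E1
    rw [ddΨ, ddf, dfx, dΨx, ddh, dhx]
    simp only
    field_simp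
    ring
  · unfold E2 Sexpr
    rw [ddΨ, ddf, dfx, dΨx, dhx, hlam]
    simp only
    field_simp
    ring
  · unfold E3 Sexpr
    rw [ddΨ, ddf, dfx, dΨx, dhx, hlam]
    simp only
    field_simp
    ring
end

section
/- Fix an integer n ≥ 2, an integer m ≥ 1, and real numbers α ≠ 0, β ≠ 0 and ρ. With parameters μ = 0, a = 1, θ = 0, the functions Ψ(x) = tanh(x), f(x) = coth(x), h(x) = (2α/(3β))(m+n−2)·ln(cosh(x)) and λ(x) = −(α/3)·sech⁴(x)·[2(n+m−2) + (n+m+1)cosh(2x)] − ρ·S(x) satisfy the three equations (E1), (E2), (E3) for every x > 0, where S is the expression defined in the context. -/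
open Real in
lemma deriv_tanh_fun : deriv (fun y : ℝ => Real.sinh y / Real.cosh y)
    = fun y : ℝ => (Real.cosh y ^ 2)⁻¹ := by
  funext y
  have hc := (Real.cosh_pos y).ne'
  have H := (Real.hasDerivAt_sinh y).div (Real.hasDerivAt_cosh y) hc
  rw [(show HasDerivAt (fun y : ℝ => Real.sinh y / Real.cosh y) _ y from H).deriv]
  have key := Real.cosh_sq_sub_sinh_sq y
  field_simp
  linear_combination key

lemma deriv_inv_cosh_sq (y : ℝ) :
    deriv (fun z : ℝ => (Real.cosh z ^ 2)⁻¹) y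
      = -2 * Real.sinh y / Real.cosh y ^ 3 := by
  have hc := (Real.cosh_pos y).ne'
  have H := ((Real.hasDerivAt_cosh y).pow 2).inv (pow_ne_zero 2 hc)
  rw [(show HasDerivAt (fun z : ℝ => (Real.cosh z ^ 2)⁻¹) _ y from H).deriv]
  simp only [Pi.pow_apply]
  field_simp
  ring

lemma deriv_coth (y : ℝ) (hy : 0 < y) :
    deriv (fun z : ℝ => Real.cosh z / Real.sinh z) y = -(Real.sinh y ^ 2)⁻¹ := by
  have hs := (Real.sinh_pos_iff.mpr hy).ne'
  have H := (Real.hasDerivAt_cosh y).div (Real.hasDerivAt_sinh y) hs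
  rw [(show HasDerivAt (fun z : ℝ => Real.cosh z / Real.sinh z) _ y from H).deriv]
  have key := Real.cosh_sq_sub_sinh_sq y
  field_simp
  linear_combination -key

lemma deriv2_coth (y : ℝ) (hy : 0 < y) :
    deriv (deriv (fun z : ℝ => Real.cosh z / Real.sinh z)) y
      = 2 * Real.cosh y / Real.sinh y ^ 3 := by
  have hev : deriv (fun z : ℝ => Real.cosh z / Real.sinh z)
      =ᶠ[nhds y] fun z => -(Real.sinh z ^ 2)⁻¹ := by
    filter_upwards [eventually_gt_nhds hy] with z hz
    exact deriv_coth z hz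
  rw [hev.deriv_eq]
  have hs := (Real.sinh_pos_iff.mpr hy).ne'
  have H := (((Real.hasDerivAt_sinh y).pow 2).inv (pow_ne_zero 2 hs)).neg
  rw [(show HasDerivAt (fun z : ℝ => -(Real.sinh z ^ 2)⁻¹) _ y from H).deriv]
  simp only [Pi.pow_apply]
  field_simp
  ring

lemma deriv_Klogcosh (K : ℝ) : deriv (fun y : ℝ => K * Real.log (Real.cosh y))
    = fun y : ℝ => K * (Real.sinh y / Real.cosh y) := by
  funext y
  have hc := (Real.cosh_pos y).ne'
  have H := ((Real.hasDerivAt_cosh y).log hc).const_mul K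
  rw [H.deriv]

lemma deriv2_Klogcosh (K : ℝ) (y : ℝ) :
    deriv (deriv (fun y : ℝ => K * Real.log (Real.cosh y))) y
      = K * (Real.cosh y ^ 2)⁻¹ := by
  rw [deriv_Klogcosh]
  have hc := (Real.cosh_pos y).ne'
  have H := ((Real.hasDerivAt_sinh y).div (Real.hasDerivAt_cosh y) hc).const_mul K
  rw [(show HasDerivAt (fun y : ℝ => K * (Real.sinh y / Real.cosh y)) _ y from H).deriv]
  have key := Real.cosh_sq_sub_sinh_sq y
  field_simp
  linear_combination K * key

/-- Example 3 (EX4): with `μ = 0`, `a = 1`, `θ = 0` and any `α ≠ 0`, `β ≠ 0`, `ρ`, the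
functions `Ψ = tanh x`, `f = coth x`, `h = (2α/(3β))(m+n−2) ln cosh x`,
`λ = −(α/3) sech⁴x (2(n+m−2) + (n+m+1) cosh 2x) − ρ S` satisfy (E1), (E2), (E3) for `x > 0`. -/
theorem example_EX4 (n m : ℕ) (hn : 2 ≤ n) (hm : 1 ≤ m)
    (α β μ ρ a θ : ℝ)
    (hα : α ≠ 0) (hβ : β ≠ 0) (hμ : μ = 0) (ha : a = 1) (hθ : θ = 0)
    (Ψ f h lam : ℝ → ℝ)
    (hΨ : ∀ x : ℝ, Ψ x = Real.tanh x)
    (hf : ∀ x : ℝ, f x = Real.cosh x / Real.sinh x)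
    (hh : ∀ x : ℝ, h x = (2 * α / (3 * β)) * ((m : ℝ) + n - 2) * Real.log (Real.cosh x))
    (hlam : ∀ x : ℝ, lam x = -(α / 3) * (1 / Real.cosh x) ^ 4 *
        (2 * ((n : ℝ) + m - 2) + ((n : ℝ) + m + 1) * Real.cosh (2 * x))
      - ρ * Sexpr n m Ψ f x) :
    ∀ x : ℝ, 0 < x → E1 n m α β μ Ψ f h x ∧ E2 n m α β ρ a Ψ f h lam x ∧
      E3 n m α β ρ a θ Ψ f h lam x := by
  intro x hx
  have hc := Real.cosh_pos x
  have hs := Real.sinh_pos_iff.mpr hx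
  have key := Real.cosh_sq_sub_sinh_sq x
  have hΨeq : Ψ = fun y => Real.sinh y / Real.cosh y := by
    funext y; rw [hΨ y, Real.tanh_eq_sinh_div_cosh]
  have hfeq : f = fun y => Real.cosh y / Real.sinh y := funext hf
  set K := 2 * α / (3 * β) * ((m : ℝ) + n - 2) with hK
  have hheq : h = fun y => K * Real.log (Real.cosh y) := by
    funext y; rw [hh y]
  have d1 : deriv Ψ x = (Real.cosh x ^ 2)⁻¹ := by rw [hΨeq, deriv_tanh_fun]
  have d2 : deriv (deriv Ψ) x = -2 * Real.sinh x / Real.cosh x ^ 3 := by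
    rw [hΨeq, deriv_tanh_fun]; exact deriv_inv_cosh_sq x
  have d3 : deriv f x = -(Real.sinh x ^ 2)⁻¹ := by rw [hfeq]; exact deriv_coth x hx
  have d4 : deriv (deriv f) x = 2 * Real.cosh x / Real.sinh x ^ 3 := by
    rw [hfeq]; exact deriv2_coth x hx
  have d5 : deriv h x = K * (Real.sinh x / Real.cosh x) := by rw [hheq, deriv_Klogcosh]
  have d6 : deriv (deriv h) x = K * (Real.cosh x ^ 2)⁻¹ := by
    rw [hheq]; exact deriv2_Klogcosh K x
  have hΨx : Ψ x = Real.sinh x / Real.cosh x := by rw [hΨeq]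
  have hfx : f x = Real.cosh x / Real.sinh x := hf x
  subst hμ ha hθ
  refine ⟨?_, ?_, ?_⟩
  · unfold E1
    rw [d1, d2, d3, d4, d5, d6, hΨx, hfx, hK]
    have hβ' : (3 : ℝ) * β ≠ 0 := by positivity
    field_simp
    linear_combination (-18 * α * β ^ 2 * (m : ℝ)) * key
  · unfold E2
    rw [hlam x, Real.cosh_two_mul x, d1, d2, d3, d5, hΨx, hfx, hK]
    field_simp
    linear_combination (α * ((n : ℝ) + m + 1)) * key
  · unfold E3
    rw [hlam x, Real.cosh_two_mul x, d1, d3, d4, d5, hΨx, hfx, hK]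
    field_simp
    linear_combination (α * ((n : ℝ) + (m : ℝ) - 5)) * key
end

section
/- Fix integers n ≥ 2 and m ≥ 1 with m + n > 2, and real numbers α ≠ 0, β ≠ 0 and ρ. With parameters μ = β²/(α(m+n−2)), a = 1, θ = 0, the functions Ψ(x) = sech(x), f(x) = cosh(x), h(x) = (α/β)(m+n−2)·ln(cosh(x)) and λ(x) = (ρ/2)(m+n−1)·sech⁴(x)·[(m+n−2)(cosh(2x) − 1) + 4] − α·sech⁴(x) satisfy the three equations (E1), (E2), (E3) for every x ∈ ℝ. -/
lemma hasDerivAt_Psi (x : ℝ) :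
    HasDerivAt (fun y => 1 / Real.cosh y) (-Real.sinh x / Real.cosh x ^ 2) x := by
  have h := (Real.hasDerivAt_cosh x).inv (Real.cosh_pos x).ne'
  simpa [one_div, Pi.inv_def] using h

lemma dPsi (x : ℝ) : deriv (fun y => 1 / Real.cosh y) x = -Real.sinh x / Real.cosh x ^ 2 :=
  (hasDerivAt_Psi x).deriv

lemma ddPsi (x : ℝ) : deriv (deriv (fun y => 1 / Real.cosh y)) x
    = (2 * Real.sinh x ^ 2 - Real.cosh x ^ 2) / Real.cosh x ^ 3 := by
  have hrw : deriv (fun y => 1 / Real.cosh y) = fun y => -Real.sinh y / Real.cosh y ^ 2 :=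
    funext dPsi
  rw [hrw]
  have h1 : HasDerivAt (fun y => -Real.sinh y) (-Real.cosh x) x := (Real.hasDerivAt_sinh x).neg
  have h2 : HasDerivAt (fun y => Real.cosh y ^ 2) (2 * Real.cosh x * Real.sinh x) x := by
    have := (Real.hasDerivAt_cosh x).pow 2
    simpa [mul_comm, mul_assoc, mul_left_comm, Pi.pow_def] using this
  have h3 := h1.fun_div h2 (by positivity)
  have := h3.deriv
  rw [this]
  have hc : Real.cosh x ≠ 0 := (Real.cosh_pos x).ne'
  field_simp
  ring

lemma dh (C x : ℝ) : deriv (fun y => C * Real.log (Real.cosh y)) x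
    = C * (Real.sinh x / Real.cosh x) := by
  have := ((Real.hasDerivAt_cosh x).log (Real.cosh_pos x).ne').const_mul C
  exact this.deriv

lemma ddh (C x : ℝ) : deriv (deriv (fun y => C * Real.log (Real.cosh y))) x
    = C * (1 / Real.cosh x ^ 2) := by
  have hrw : deriv (fun y => C * Real.log (Real.cosh y))
      = fun y => C * (Real.sinh y / Real.cosh y) := funext (dh C)
  rw [hrw]
  have h3 := ((Real.hasDerivAt_sinh x).fun_div (Real.hasDerivAt_cosh x) (Real.cosh_pos x).ne').const_mul C
  rw [h3.deriv]
  have hc : Real.cosh x ≠ 0 := (Real.cosh_pos x).ne'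
  have key : Real.cosh x * Real.cosh x - Real.sinh x * Real.sinh x = 1 := by
    have := Real.cosh_sq_sub_sinh_sq x
    nlinarith [this]
  rw [key]

lemma dcosh (x : ℝ) : deriv (fun y => Real.cosh y) x = Real.sinh x := by
  simp [Real.deriv_cosh]

lemma ddcosh (x : ℝ) : deriv (deriv (fun y => Real.cosh y)) x = Real.cosh x := by
  have : deriv (fun y => Real.cosh y) = Real.sinh := by
    funext y; simp [Real.deriv_cosh]
  rw [this, Real.deriv_sinh]

set_option maxHeartbeats 1000000 in
/-- Example 4 (EX5): with `μ = β²/(α(m+n−2))`, `a = 1`, `θ = 0` and any `α ≠ 0`, `β ≠ 0`,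
`ρ`, the functions `Ψ = sech x`, `f = cosh x`, `h = (α/β)(m+n−2) ln cosh x`,
`λ = (ρ/2)(m+n−1) sech⁴x ((m+n−2)(cosh 2x − 1) + 4) − α sech⁴x`
satisfy (E1), (E2), (E3) for all `x ∈ ℝ`. -/
theorem example_EX5 (n m : ℕ) (hn : 2 ≤ n) (hm : 1 ≤ m) (hmn : 2 < m + n)
    (α β μ ρ a θ : ℝ)
    (hα : α ≠ 0) (hβ : β ≠ 0) (hμ : μ = β ^ 2 / (α * ((m : ℝ) + n - 2)))
    (ha : a = 1) (hθ : θ = 0)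
    (Ψ f h lam : ℝ → ℝ)
    (hΨ : ∀ x : ℝ, Ψ x = 1 / Real.cosh x)
    (hf : ∀ x : ℝ, f x = Real.cosh x)
    (hh : ∀ x : ℝ, h x = (α / β) * ((m : ℝ) + n - 2) * Real.log (Real.cosh x))
    (hlam : ∀ x : ℝ, lam x = (ρ / 2) * ((m : ℝ) + n - 1) * (1 / Real.cosh x) ^ 4 *
        (((m : ℝ) + n - 2) * (Real.cosh (2 * x) - 1) + 4)
      - α * (1 / Real.cosh x) ^ 4) :
    ∀ x : ℝ, E1 n m α β μ Ψ f h x ∧ E2 n m α β ρ a Ψ f h lam x ∧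
      E3 n m α β ρ a θ Ψ f h lam x := by
  intro x
  subst hμ ha hθ
  have hΨ' : Ψ = fun y => 1 / Real.cosh y := funext hΨ
  have hf' : f = fun y => Real.cosh y := funext hf
  have hh' : h = fun y => (α / β) * ((m : ℝ) + n - 2) * Real.log (Real.cosh y) := funext hh
  have hlam' : lam = fun y => (ρ / 2) * ((m : ℝ) + n - 1) * (1 / Real.cosh y) ^ 4 *
        (((m : ℝ) + n - 2) * (Real.cosh (2 * y) - 1) + 4)
      - α * (1 / Real.cosh y) ^ 4 := funext hlam
  subst hΨ' hf' hh' hlam'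
  have hc : Real.cosh x ≠ 0 := (Real.cosh_pos x).ne'
  have hmn' : (m : ℝ) + (n : ℝ) - 2 ≠ 0 := by
    have : (2 : ℝ) < (m : ℝ) + (n : ℝ) := by exact_mod_cast hmn
    linarith
  have he : Real.exp x ≠ 0 := Real.exp_ne_zero x
  obtain ⟨E, hE⟩ : ∃ E, Real.exp x = E := ⟨_, rfl⟩
  rw [hE] at he
  have hE2 : E ^ 2 + 1 ≠ 0 := by positivity
  have hsinh : Real.sinh x = (E ^ 2 - 1) / (2 * E) := by
    rw [Real.sinh_eq, Real.exp_neg, hE]; field_simp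
  have hcosh : Real.cosh x = (E ^ 2 + 1) / (2 * E) := by
    rw [Real.cosh_eq, Real.exp_neg, hE]; field_simp
  refine ⟨?_, ?_, ?_⟩
  · unfold E1
    simp only [dPsi, ddPsi, dcosh, ddcosh, dh, ddh]
    rw [hsinh, hcosh]
    field_simp [he, hE2, hα, hβ, hmn']
    ring
  · unfold E2 Sexpr
    simp only [dPsi, ddPsi, dcosh, ddcosh, dh, ddh]
    rw [Real.cosh_two_mul, hsinh, hcosh]
    field_simp [he, hE2, hα, hβ, hmn']
    ring
  · unfold E3 Sexpr
    simp only [dPsi, ddPsi, dcosh, ddcosh, dh, ddh]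
    rw [Real.cosh_two_mul, hsinh, hcosh]
    field_simp [he, hE2, hα, hβ, hmn']
    ring
end

section
/- Fix an integer n ≥ 2 and an integer m > 2. With parameters α = 1, β = −1, μ = 1, ρ = 0, a = 1, θ = m − 2, the functions Ψ(ξ) ≡ 1, f(ξ) = ξ, h(ξ) = −ln(ξ) and λ(ξ) ≡ 0 satisfy the three equations (E1), (E2), (E3) for every ξ > 0. -/
/-- Example (Incomplete1): with `α = 1`, `β = −1`, `μ = 1`, `ρ = 0`, `a = 1`, `θ = m − 2`
(`m > 2`), the functions `Ψ ≡ 1`, `f = ξ`, `h = −ln ξ`, `λ ≡ 0` satisfy (E1), (E2), (E3)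
for every `ξ > 0`. -/
theorem example_Incomplete1 (n m : ℕ) (hn : 2 ≤ n) (hm : 2 < m)
    (α β μ ρ a θ : ℝ)
    (hα : α = 1) (hβ : β = -1) (hμ : μ = 1) (hρ : ρ = 0) (ha : a = 1)
    (hθ : θ = (m : ℝ) - 2)
    (Ψ f h lam : ℝ → ℝ)
    (hΨ : ∀ ξ : ℝ, Ψ ξ = 1)
    (hf : ∀ ξ : ℝ, f ξ = ξ)
    (hh : ∀ ξ : ℝ, h ξ = -Real.log ξ)
    (hlam : ∀ ξ : ℝ, lam ξ = 0) :
    ∀ ξ : ℝ, 0 < ξ → E1 n m α β μ Ψ f h ξ ∧ E2 n m α β ρ a Ψ f h lam ξ ∧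
      E3 n m α β ρ a θ Ψ f h lam ξ := by
  have hΨ' : Ψ = fun _ => (1:ℝ) := funext hΨ
  have hf' : f = fun x => x := funext hf
  have hh' : h = fun x => -Real.log x := funext hh
  subst hΨ' hf' hh' hα hβ hμ hρ ha hθ
  have dΨ : deriv (fun _ : ℝ => (1:ℝ)) = fun _ => 0 := by
    funext x; simp
  have df : deriv (fun x : ℝ => x) = fun _ => (1:ℝ) := by
    funext x; simp
  have dh : deriv (fun x : ℝ => -Real.log x) = fun x => -x⁻¹ := by
    funext x; rw [deriv.fun_neg, Real.deriv_log]
  intro ξ hξ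
  have hξ0 : ξ ≠ 0 := ne_of_gt hξ
  have ddh : deriv (deriv (fun x : ℝ => -Real.log x)) ξ = (ξ ^ 2)⁻¹ := by
    rw [dh]
    have : deriv (fun x : ℝ => -x⁻¹) ξ = -deriv (fun x : ℝ => x⁻¹) ξ := deriv.fun_neg
    rw [this, deriv_inv, neg_neg]
  refine ⟨?_, ?_, ?_⟩
  · unfold E1
    rw [ddh, dh, dΨ, df]
    simp
  · unfold E2 Sexpr
    rw [dΨ, df]
    simp [hlam]
  · unfold E3 Sexpr
    rw [dh, dΨ, df]
    simp [hlam]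
    field_simp
    ring
end

section
/- Fix an integer n ≥ 2 and an integer m ≥ 1. With parameters α = 1, β = 1, μ = 0, ρ = 0, a = 1, θ = 0, the functions Ψ(ξ) = e^{−ξ}, f(ξ) = e^{ξ}, h(ξ) = −((2−n−m)/2)·ξ and λ(ξ) = ((2−n−m)/2)·e^{−2ξ} satisfy the three equations (E1), (E2), (E3) for every ξ ∈ ℝ. -/
lemma dnegexp : deriv (fun x : ℝ => Real.exp (-x)) = fun x => -Real.exp (-x) := by
  funext x
  have : HasDerivAt (fun x : ℝ => Real.exp (-x)) (-Real.exp (-x)) x := by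
    simpa [Function.comp_def] using (Real.hasDerivAt_exp (-x)).comp x (hasDerivAt_neg x)
  exact this.deriv

lemma dnegexp2 : deriv (fun x : ℝ => -Real.exp (-x)) = fun x => Real.exp (-x) := by
  funext x
  have : HasDerivAt (fun x : ℝ => -Real.exp (-x)) (Real.exp (-x)) x := by
    simpa [Function.comp_def, Pi.neg_def] using ((Real.hasDerivAt_exp (-x)).comp x (hasDerivAt_neg x)).neg
  exact this.deriv

lemma dlin (c : ℝ) : deriv (fun x : ℝ => c * x) = fun _ => c := by
  funext x
  simpa using ((hasDerivAt_id x).const_mul c).deriv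



/-- The Feitosa et al. example recovered via Proposition 2: with `α = 1`, `β = 1`, `μ = 0`,
`ρ = 0`, `a = 1`, `θ = 0`, the functions `Ψ = e^{−ξ}`, `f = e^ξ`, `h = −((2−n−m)/2)ξ`,
`λ = ((2−n−m)/2) e^{−2ξ}` satisfy (E1), (E2), (E3) for every `ξ ∈ ℝ`. -/
theorem example_Feitosa (n m : ℕ) (hn : 2 ≤ n) (hm : 1 ≤ m)
    (α β μ ρ a θ : ℝ)
    (hα : α = 1) (hβ : β = 1) (hμ : μ = 0) (hρ : ρ = 0) (ha : a = 1) (hθ : θ = 0)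
    (Ψ f h lam : ℝ → ℝ)
    (hΨ : ∀ ξ : ℝ, Ψ ξ = Real.exp (-ξ))
    (hf : ∀ ξ : ℝ, f ξ = Real.exp ξ)
    (hh : ∀ ξ : ℝ, h ξ = -((2 - (n : ℝ) - m) / 2) * ξ)
    (hlam : ∀ ξ : ℝ, lam ξ = ((2 - (n : ℝ) - m) / 2) * Real.exp (-2 * ξ)) :
    ∀ ξ : ℝ, E1 n m α β μ Ψ f h ξ ∧ E2 n m α β ρ a Ψ f h lam ξ ∧
      E3 n m α β ρ a θ Ψ f h lam ξ := by
  subst hα hβ hμ hρ ha hθ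
  have hΨe : Ψ = fun x => Real.exp (-x) := funext hΨ
  have hfe : f = Real.exp := funext hf
  have hhe : h = fun x => -((2 - (n : ℝ) - m) / 2) * x := funext hh
  subst hΨe hfe hhe
  intro ξ
  have dfe : deriv Real.exp = Real.exp := Real.deriv_exp
  have ddfe : deriv (deriv Real.exp) = Real.exp := by rw [dfe]; exact Real.deriv_exp
  have hE : Real.exp ξ ≠ 0 := Real.exp_ne_zero ξ
  have e1 : Real.exp (-ξ) = (Real.exp ξ)⁻¹ := Real.exp_neg ξ
  have e2 : Real.exp (-2 * ξ) = ((Real.exp ξ)⁻¹) ^ 2 := by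
    rw [show (-2 : ℝ) * ξ = -ξ + -ξ by ring, Real.exp_add, e1]; ring
  refine ⟨?_, ?_, ?_⟩
  · unfold E1
    simp only [dnegexp, dnegexp2, dfe, dlin, deriv_const', hlam, e1, e2]
    field_simp
    ring
  · unfold E2 Sexpr
    simp only [dnegexp, dnegexp2, dfe, dlin, deriv_const', hlam, e1, e2]
    field_simp
    ring
  · unfold E3 Sexpr
    simp only [dnegexp, dnegexp2, dfe, dlin, deriv_const', hlam, e1, e2]
    field_simp
    ring
end
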